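/- Let n ≥ 1, let Q be an n×n real matrix with nonnegative entries and zero diagonal, let x ∈ ℝⁿ, and define Γ : ℝⁿ → ℝⁿ by Γ[z]_i = ( x_i − Σ_{j≠i} q_{ij} z_j )_{-}. Suppose the feasible set F(x) = { z ∈ ℝⁿ : z ≥ 0 componentwise and (I−Q)z ≥ −x componentwise } is nonempty. Then: (a) every z ∈ F(x) satisfies Γ[z] ≤ z componentwise; (b) the iterates z⁽ᵏ⁾ = Γᵏ[0] starting from z⁽⁰⁾ = 0 form a componentwise nondecreasing sequence bounded above by every element of F(x); and (c) z⁽ᵏ⁾ converges as k → ∞ to the least nonnegative solution z* of the jump system JS(x), i.e., z* solves JS(x) and z* ≤ z componentwise for every nonnegative solution z of JS(x). -/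

import Mathlib

/-!
Γ is monotone (the off-diagonal entries of `Q` are nonnegative) and continuous, every point of
`F(x)` is a post-fixed point of Γ, and the fixed points of Γ are exactly the solutions of JS(x).
So this is a Kleene-type fixed-point argument in `ℝⁿ`: the iterates of Γ from `0 ≤ Γ 0` increase,
stay below every nonnegative post-fixed point, hence converge to their supremum, which is a fixed
point by continuity and lies below every nonnegative fixed point.
-/

open Matrix Finset Filter

/-- Negative part: `(a)₋ = max(0, −a)`. -/
noncomputable def nPart (a : ℝ) : ℝ := max 0 (-a)

/-- The jump system JS(x): `z i = (x i − ∑_{j ≠ i} Q i j * z j)₋` for all `i`. -/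
noncomputable def JS {n : ℕ} (Q : Matrix (Fin n) (Fin n) ℝ) (x z : Fin n → ℝ) : Prop :=
  ∀ i, z i = nPart (x i - ∑ j ∈ Finset.univ.erase i, Q i j * z j)

/-- The cone `C = {u : u ≥ 0 and uᵀ(I − Q) ≤ 0 componentwise}`. -/
def coneC {n : ℕ} (Q : Matrix (Fin n) (Fin n) ℝ) : Set (Fin n → ℝ) :=
  {u | (∀ i, 0 ≤ u i) ∧ ∀ j, Matrix.vecMul u (1 - Q) j ≤ 0}

/-- The dual cone `C* = {y : uᵀ y ≥ 0 for all u ∈ C}`. -/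
def dualConeC {n : ℕ} (Q : Matrix (Fin n) (Fin n) ℝ) : Set (Fin n → ℝ) :=
  {y | ∀ u ∈ coneC Q, 0 ≤ ∑ i, u i * y i}

/-- The feasible set `F(x) = {z : z ≥ 0 and (I − Q) z ≥ −x componentwise}`. -/
def feas {n : ℕ} (Q : Matrix (Fin n) (Fin n) ℝ) (x : Fin n → ℝ) : Set (Fin n → ℝ) :=
  {z | (∀ i, 0 ≤ z i) ∧ ∀ i, -(x i) ≤ Matrix.mulVec (1 - Q) z i}

open Topology Function

section KleeneIteration

variable {α : Type*} {f : α → α} {a z : α}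

theorem Monotone.iterate_le_of_le_of_map_le [Preorder α] (hf : Monotone f) (ha : a ≤ z)
    (hz : f z ≤ z) (k : ℕ) : f^[k] a ≤ z :=
  (hf.iterate k ha).trans (hf.antitone_iterate_of_map_le hz (Nat.zero_le k))

theorem Monotone.exists_tendsto_iterate_least_fixedPt [ConditionallyCompleteLattice α]
    [TopologicalSpace α] [SupConvergenceClass α] [T2Space α] (hf : Monotone f)
    (hfc : Continuous f) (ha : a ≤ f a) (haz : a ≤ z) (hz : f z ≤ z) :
    ∃ l, Tendsto (fun k => f^[k] a) atTop (𝓝 l) ∧ a ≤ l ∧ IsFixedPt f l ∧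
      ∀ w, a ≤ w → f w ≤ w → l ≤ w := by
  have hbdd : BddAbove (Set.range fun k => f^[k] a) :=
    ⟨z, Set.forall_mem_range.2 (hf.iterate_le_of_le_of_map_le haz hz)⟩
  have hlim := tendsto_atTop_ciSup (hf.monotone_iterate_of_le_map ha) hbdd
  exact ⟨_, hlim, le_ciSup hbdd 0, isFixedPt_of_tendsto_iterate hlim hfc.continuousAt,
    fun w haw hw => ciSup_le (hf.iterate_le_of_le_of_map_le haw hw)⟩

end KleeneIteration

theorem nPart_nonneg (a : ℝ) : 0 ≤ nPart a := le_max_left _ _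

theorem antitone_nPart : Antitone nPart := fun _ _ h => max_le_max le_rfl (neg_le_neg h)

theorem continuous_nPart : Continuous nPart := continuous_const.max continuous_neg

section JumpMap

variable {n : ℕ} (Q : Matrix (Fin n) (Fin n) ℝ) (x : Fin n → ℝ)

noncomputable def jumpMap (z : Fin n → ℝ) : Fin n → ℝ :=
  fun i => nPart (x i - ∑ j ∈ univ.erase i, Q i j * z j)

theorem jumpMap_nonneg (z : Fin n → ℝ) : 0 ≤ jumpMap Q x z := fun _ => nPart_nonneg _

theorem continuous_jumpMap : Continuous (jumpMap Q x) :=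
  continuous_pi fun _ => continuous_nPart.comp <| continuous_const.sub <|
    continuous_finsetSum _ fun j _ => continuous_const.mul (continuous_apply j)

variable {Q x}

theorem monotone_jumpMap (hQ : ∀ i j, 0 ≤ Q i j) : Monotone (jumpMap Q x) :=
  fun _ _ hzw i => antitone_nPart <| sub_le_sub_left
    (sum_le_sum fun j _ => mul_le_mul_of_nonneg_left (hzw j) (hQ i j)) _

theorem JS_iff_isFixedPt_jumpMap {z : Fin n → ℝ} : JS Q x z ↔ IsFixedPt (jumpMap Q x) z :=
  ⟨fun h => funext fun i => (h i).symm, fun h i => (congrFun h i).symm⟩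

theorem one_sub_mulVec_apply_of_diag_eq_zero (hQdiag : ∀ i, Q i i = 0) (z : Fin n → ℝ)
    (i : Fin n) :
    ((1 - Q) *ᵥ z) i = z i - ∑ j ∈ univ.erase i, Q i j * z j := by
  rw [sub_mulVec, one_mulVec, Pi.sub_apply, mulVec, dotProduct,
    sum_erase _ (by simp [hQdiag i])]

theorem jumpMap_le_of_mem_feas (hQdiag : ∀ i, Q i i = 0) {z : Fin n → ℝ} (hz : z ∈ feas Q x) :
    jumpMap Q x z ≤ z := fun i => by
  have := hz.2 i
  rw [one_sub_mulVec_apply_of_diag_eq_zero hQdiag] at this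
  exact max_le (hz.1 i) (by linarith)

end JumpMap

theorem gamma_iterates_converge_to_minimal_general {n : ℕ}
    (Q : Matrix (Fin n) (Fin n) ℝ)
    (hQnonneg : ∀ i j, 0 ≤ Q i j) (hQdiag : ∀ i, Q i i = 0)
    (x : Fin n → ℝ)
    (Γ : (Fin n → ℝ) → (Fin n → ℝ))
    (hΓ : ∀ z i, Γ z i = nPart (x i - ∑ j ∈ Finset.univ.erase i, Q i j * z j))
    (hne : (feas Q x).Nonempty) :
    (∀ z ∈ feas Q x, ∀ i, Γ z i ≤ z i) ∧
    (∀ k : ℕ, ∀ i, (Γ^[k] 0) i ≤ (Γ^[k + 1] 0) i) ∧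
    (∀ k : ℕ, ∀ z ∈ feas Q x, ∀ i, (Γ^[k] 0) i ≤ z i) ∧
    (∃ zstar : Fin n → ℝ,
      Tendsto (fun k => Γ^[k] 0) atTop (nhds zstar) ∧
      (∀ i, 0 ≤ zstar i) ∧ JS Q x zstar ∧
      ∀ z : Fin n → ℝ, (∀ i, 0 ≤ z i) → JS Q x z → ∀ i, zstar i ≤ z i) := by
  obtain rfl : Γ = jumpMap Q x := funext fun z => funext (hΓ z)
  have hmono := monotone_jumpMap (x := x) hQnonneg
  have hpost : ∀ z ∈ feas Q x, jumpMap Q x z ≤ z := fun z hz => jumpMap_le_of_mem_feas hQdiag hz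
  have hbelow : ∀ k, ∀ z ∈ feas Q x, (jumpMap Q x)^[k] 0 ≤ z := fun k z hz =>
    hmono.iterate_le_of_le_of_map_le hz.1 (hpost z hz) k
  obtain ⟨zb, hzb⟩ := hne
  obtain ⟨zstar, hlim, hnonneg, hfix, hleast⟩ := hmono.exists_tendsto_iterate_least_fixedPt
    (continuous_jumpMap Q x) (jumpMap_nonneg Q x 0) hzb.1 (hpost zb hzb)
  refine ⟨hpost, fun k => hmono.monotone_iterate_of_le_map (jumpMap_nonneg Q x 0) k.le_succ,
    hbelow, zstar, hlim, hnonneg, JS_iff_isFixedPt_jumpMap.2 hfix,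
    fun z hz0 hz => hleast z hz0 (JS_iff_isFixedPt_jumpMap.1 hz).le⟩

/-- Iterative construction of the minimal jump: if `F(x)` is nonempty, then
(a) `Γ[z] ≤ z` for every `z ∈ F(x)`; (b) the iterates `z⁽ᵏ⁾ = Γᵏ[0]` are componentwise
nondecreasing and bounded above by every element of `F(x)`; and (c) they converge to
the least nonnegative solution `z*` of the jump system JS(x). -/
theorem gamma_iterates_converge_to_minimal {n : ℕ} (hn : 1 ≤ n)
    (Q : Matrix (Fin n) (Fin n) ℝ)
    (hQnonneg : ∀ i j, 0 ≤ Q i j) (hQdiag : ∀ i, Q i i = 0)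
    (x : Fin n → ℝ)
    (Γ : (Fin n → ℝ) → (Fin n → ℝ))
    (hΓ : ∀ z i, Γ z i = nPart (x i - ∑ j ∈ Finset.univ.erase i, Q i j * z j))
    (hne : (feas Q x).Nonempty) :
    (∀ z ∈ feas Q x, ∀ i, Γ z i ≤ z i) ∧
    (∀ k : ℕ, ∀ i, (Γ^[k] 0) i ≤ (Γ^[k + 1] 0) i) ∧
    (∀ k : ℕ, ∀ z ∈ feas Q x, ∀ i, (Γ^[k] 0) i ≤ z i) ∧
    (∃ zstar : Fin n → ℝ,
      Tendsto (fun k => Γ^[k] 0) atTop (nhds zstar) ∧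
      (∀ i, 0 ≤ zstar i) ∧ JS Q x zstar ∧
      ∀ z : Fin n → ℝ, (∀ i, 0 ≤ z i) → JS Q x z → ∀ i, zstar i ≤ z i) :=
  gamma_iterates_converge_to_minimal_general Q hQnonneg hQdiag x Γ hΓ hne
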